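/- If the block matrix [[A, X], [X*, B]] with A, B positive semidefinite is positive semidefinite, then there exists a unitary U such that X*X ≤ B^{1/2} U* A U B^{1/2}, equivalently |X|² ≤ |A^{1/2} U B^{1/2}|², and hence |X| ≤ |A^{1/2} U B^{1/2}|. -/

import Mathlib

open Matrix
open scoped ComplexOrder

/-- The matrix square root of a positive semidefinite matrix, as defined in Mathlib (Dec 2024). -/
noncomputable def Matrix.PosSemidef.sqrt {n 𝕜 : Type*} [Fintype n] [DecidableEq n] [RCLike 𝕜]
    {A : Matrix n n 𝕜} (hA : A.PosSemidef) : Matrix n n 𝕜 :=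
  (hA.1.eigenvectorUnitary : Matrix n n 𝕜) * diagonal ((↑) ∘ (√·) ∘ hA.1.eigenvalues) *
    (star (hA.1.eigenvectorUnitary : Matrix n n 𝕜))

lemma Matrix.PosSemidef.posSemidef_sqrt {n 𝕜 : Type*} [Fintype n] [DecidableEq n] [RCLike 𝕜]
    {A : Matrix n n 𝕜} (hA : A.PosSemidef) : hA.sqrt.PosSemidef := by
  unfold Matrix.PosSemidef.sqrt
  have hd : (diagonal ((↑) ∘ (√·) ∘ hA.1.eigenvalues) : Matrix n n 𝕜).PosSemidef := by
    apply Matrix.PosSemidef.diagonal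
    intro i
    simp only [Pi.zero_apply, Function.comp_apply]
    exact_mod_cast Real.sqrt_nonneg _
  have := hd.mul_mul_conjTranspose_same (hA.1.eigenvectorUnitary : Matrix n n 𝕜)
  simpa [Matrix.star_eq_conjTranspose] using this

lemma Matrix.PosSemidef.sqrt_mul_self {n 𝕜 : Type*} [Fintype n] [DecidableEq n] [RCLike 𝕜]
    {A : Matrix n n 𝕜} (hA : A.PosSemidef) : hA.sqrt * hA.sqrt = A := by
  unfold Matrix.PosSemidef.sqrt
  set V : Matrix n n 𝕜 := (hA.1.eigenvectorUnitary : Matrix n n 𝕜)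
  have hV2 : star V * V = 1 := Matrix.mem_unitaryGroup_iff'.mp hA.1.eigenvectorUnitary.2
  have hspec : A = V * diagonal ((↑) ∘ hA.1.eigenvalues) * star V := by
    conv_lhs => rw [hA.1.spectral_theorem]
    rfl
  have e : V * diagonal ((↑) ∘ (√·) ∘ hA.1.eigenvalues) * star V *
      (V * diagonal ((↑) ∘ (√·) ∘ hA.1.eigenvalues) * star V)
      = V * (diagonal ((↑) ∘ (√·) ∘ hA.1.eigenvalues) * (star V * V) *
        diagonal ((↑) ∘ (√·) ∘ hA.1.eigenvalues)) * star V := by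
    simp only [Matrix.mul_assoc]
  rw [e, hV2, Matrix.mul_one, Matrix.diagonal_mul_diagonal]
  conv_rhs => rw [hspec]
  congr 3
  funext i
  simp only [Function.comp_apply]
  rw [← RCLike.ofReal_mul, Real.mul_self_sqrt (hA.eigenvalues_nonneg i)]

/-- The absolute value `|Z| = (Z* Z)^{1/2}` of a matrix. -/
noncomputable def absM {n : ℕ} (Z : Matrix (Fin n) (Fin n) ℂ) : Matrix (Fin n) (Fin n) ℂ :=
  (Matrix.posSemidef_conjTranspose_mul_self Z).sqrt

section Charpoly

variable {m : Type*} [Fintype m] [DecidableEq m]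

lemma my_charpoly_mul_comm (A B : Matrix m m ℂ) :
    (A * B).charpoly = (B * A).charpoly := by
  classical
  set R := Polynomial ℂ
  set s : Matrix m m R := Matrix.scalar m Polynomial.X with hs
  set A' : Matrix m m R := A.map Polynomial.C with hA'
  set B' : Matrix m m R := B.map Polynomial.C with hB'
  have hcomm : ∀ M : Matrix m m R, s * M = M * s := fun M =>
    (Matrix.scalar_commute _ (fun r' => Commute.all _ _) M)
  set M₁ : Matrix (m ⊕ m) (m ⊕ m) R := Matrix.fromBlocks s A' B' 1 with hM₁
  set M₂ : Matrix (m ⊕ m) (m ⊕ m) R := Matrix.fromBlocks 1 0 (-B') s with hM₂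
  have hchAB : charmatrix (A * B) = s - A' * B' := by
    rw [charmatrix, RingHom.mapMatrix_apply, Matrix.map_mul]
  have hchBA : charmatrix (B * A) = s - B' * A' := by
    rw [charmatrix, RingHom.mapMatrix_apply, Matrix.map_mul]
  have h12 : M₁ * M₂ = Matrix.fromBlocks (charmatrix (A * B)) (A' * s) 0 s := by
    rw [hM₁, hM₂, Matrix.fromBlocks_multiply, hchAB]
    congr 1 <;> simp [Matrix.mul_neg, sub_eq_add_neg]
    · exact add_neg_cancel (G := Matrix m m (Polynomial ℂ)) _
  have h21 : M₂ * M₁ = Matrix.fromBlocks s A' 0 (charmatrix (B * A)) := by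
    rw [hM₂, hM₁, Matrix.fromBlocks_multiply, hchBA]
    congr 1 <;> simp [Matrix.neg_mul, hcomm B', sub_eq_add_neg, add_comm]
    · exact add_neg_cancel (G := Matrix m m (Polynomial ℂ)) _
  have hdet : (M₁ * M₂).det = (M₂ * M₁).det := by
    rw [Matrix.det_mul, Matrix.det_mul, mul_comm]
  rw [h12, h21, Matrix.det_fromBlocks_zero₂₁, Matrix.det_fromBlocks_zero₂₁] at hdet
  have hsd : s.det ≠ 0 := by
    have : s.det = Polynomial.X ^ Fintype.card m := by
      simp [hs, Matrix.scalar_apply, Matrix.det_diagonal]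
    rw [this]
    exact pow_ne_zero _ Polynomial.X_ne_zero
  have := hdet
  rw [Matrix.charpoly, Matrix.charpoly]
  rw [mul_comm] at this
  exact mul_left_cancel₀ hsd this



lemma my_exists_perm {k : ℕ} (a b : Fin k → ℝ)
    (h : Multiset.map a Finset.univ.val = Multiset.map b Finset.univ.val) :
    ∃ σ : Equiv.Perm (Fin k), a = b ∘ σ := by
  have ha : Monotone (a ∘ Tuple.sort a) := Tuple.monotone_sort a
  have hb : Monotone (b ∘ Tuple.sort b) := Tuple.monotone_sort b
  have h3 : List.Perm (List.ofFn a) (List.ofFn b) := by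
    rw [← Multiset.coe_eq_coe]
    simpa [← Fin.univ_val_map] using h
  have hperm : List.Perm (List.ofFn (a ∘ Tuple.sort a)) (List.ofFn (b ∘ Tuple.sort b)) :=
    ((Tuple.sort a).ofFn_comp_perm a).trans (h3.trans ((Tuple.sort b).ofFn_comp_perm b).symm)
  have key : a ∘ Tuple.sort a = b ∘ Tuple.sort b :=
    List.ofFn_injective (hperm.eq_of_sortedLE ha.sortedLE_ofFn hb.sortedLE_ofFn)
  refine ⟨(Tuple.sort a).symm.trans (Tuple.sort b), funext fun i => ?_⟩
  have := congrFun key ((Tuple.sort a).symm i)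
  simpa using this

section PermM

variable {k : ℕ} (σ : Equiv.Perm (Fin k))

noncomputable def permM : Matrix (Fin k) (Fin k) ℂ := σ.toPEquiv.toMatrix

lemma permM_star : star (permM σ) = permM σ.symm := by
  ext i j
  simp only [permM, star_apply, PEquiv.toMatrix_toPEquiv_apply, Pi.single_apply]
  by_cases h : σ j = i
  · subst h; simp
  · rw [if_neg (Ne.symm h), if_neg (by rw [eq_comm, Equiv.symm_apply_eq, eq_comm]; exact h)]
    simp

lemma permM_mul_permM (τ : Equiv.Perm (Fin k)) :
    permM σ * permM τ = permM (σ.trans τ) := by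
  rw [permM, permM, permM, ← PEquiv.toMatrix_trans, ← Equiv.toPEquiv_trans]

lemma permM_unitary : permM σ ∈ Matrix.unitaryGroup (Fin k) ℂ := by
  rw [Matrix.mem_unitaryGroup_iff, permM_star, permM_mul_permM, Equiv.self_trans_symm]
  simp [permM, Equiv.toPEquiv_refl, PEquiv.toMatrix_refl]

lemma permM_conj_diagonal (d : Fin k → ℂ) :
    permM σ * Matrix.diagonal d * star (permM σ) = Matrix.diagonal (d ∘ σ) := by
  rw [permM_star, permM, permM, PEquiv.toMatrix_toPEquiv_mul, PEquiv.mul_toMatrix_toPEquiv,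
    Equiv.symm_symm]
  ext i j
  by_cases h : i = j
  · subst h; simp
  · simp [Matrix.submatrix_apply, Matrix.diagonal_apply, h, σ.injective.ne h]

end PermM

section Sim

variable {k : ℕ}

lemma my_charpoly_unitary_conj (V M : Matrix (Fin k) (Fin k) ℂ)
    (hV : V ∈ Matrix.unitaryGroup (Fin k) ℂ) :
    (V * M * star V).charpoly = M.charpoly := by
  have h1 : V * star V = 1 := Matrix.mem_unitaryGroup_iff.mp hV
  set s : Matrix (Fin k) (Fin k) (Polynomial ℂ) := Matrix.scalar (Fin k) Polynomial.X with hs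
  set V' : Matrix (Fin k) (Fin k) (Polynomial ℂ) := V.map Polynomial.C with hV'
  set W' : Matrix (Fin k) (Fin k) (Polynomial ℂ) := (star V).map Polynomial.C with hW'
  have hVW : V' * W' = 1 := by
    rw [hV', hW', ← Matrix.map_mul, h1]
    simp [Matrix.map_one _ (Polynomial.C_0) (Polynomial.C_1)]
  have hcomm : s * V' = V' * s := Matrix.scalar_commute _ (fun r' => Commute.all _ _) V'
  have hsVW : V' * s * W' = s := by
    rw [← hcomm, Matrix.mul_assoc, hVW, Matrix.mul_one]
  have hch : charmatrix (V * M * star V) = V' * charmatrix M * W' := by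
    rw [charmatrix, charmatrix, RingHom.mapMatrix_apply, RingHom.mapMatrix_apply,
      Matrix.map_mul, Matrix.map_mul, Matrix.mul_sub, Matrix.sub_mul, ← hV', ← hW', ← hs, hsVW]
  rw [Matrix.charpoly, Matrix.charpoly, hch, Matrix.det_mul, Matrix.det_mul]
  have hd : V'.det * W'.det = 1 := by rw [← Matrix.det_mul, hVW, Matrix.det_one]
  calc V'.det * (charmatrix M).det * W'.det
      = V'.det * W'.det * (charmatrix M).det := by ring
    _ = (charmatrix M).det := by rw [hd, one_mul]

lemma my_charpoly_diagonal (d : Fin k → ℂ) :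
    (Matrix.diagonal d).charpoly = ∏ i, (Polynomial.X - Polynomial.C (d i)) := by
  have : charmatrix (Matrix.diagonal d) =
      Matrix.diagonal (fun i => Polynomial.X - Polynomial.C (d i)) := by
    ext i j
    by_cases h : i = j
    · subst h; simp
    · simp [charmatrix_apply_ne _ _ _ h, Matrix.diagonal_apply_ne _ h]
  rw [Matrix.charpoly, this, Matrix.det_diagonal]

/-- Two Hermitian matrices with the same characteristic polynomial are unitarily similar. -/
lemma my_hermitian_similar {H₁ H₂ : Matrix (Fin k) (Fin k) ℂ}
    (h₁ : H₁.IsHermitian) (h₂ : H₂.IsHermitian)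
    (hc : H₁.charpoly = H₂.charpoly) :
    ∃ U ∈ Matrix.unitaryGroup (Fin k) ℂ, H₁ = U * H₂ * star U := by
  set V₁ : Matrix (Fin k) (Fin k) ℂ := (Matrix.IsHermitian.eigenvectorUnitary h₁ : Matrix (Fin k) (Fin k) ℂ) with hV₁d
  set V₂ : Matrix (Fin k) (Fin k) ℂ := (Matrix.IsHermitian.eigenvectorUnitary h₂ : Matrix (Fin k) (Fin k) ℂ) with hV₂d
  have hV₁ : V₁ ∈ Matrix.unitaryGroup (Fin k) ℂ := (Matrix.IsHermitian.eigenvectorUnitary h₁).2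
  have hV₂ : V₂ ∈ Matrix.unitaryGroup (Fin k) ℂ := (Matrix.IsHermitian.eigenvectorUnitary h₂).2
  set d₁ : Fin k → ℂ := RCLike.ofReal ∘ h₁.eigenvalues with hd₁
  set d₂ : Fin k → ℂ := RCLike.ofReal ∘ h₂.eigenvalues with hd₂
  have hs₁ : H₁ = V₁ * Matrix.diagonal d₁ * star V₁ := by rw [h₁.spectral_theorem, Unitary.conjStarAlgAut_apply]
  have hs₂ : H₂ = V₂ * Matrix.diagonal d₂ * star V₂ := by rw [h₂.spectral_theorem, Unitary.conjStarAlgAut_apply]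
  have e₁ : H₁.charpoly = (Matrix.diagonal d₁).charpoly := by
    conv_lhs => rw [hs₁]
    exact my_charpoly_unitary_conj V₁ _ hV₁
  have e₂ : H₂.charpoly = (Matrix.diagonal d₂).charpoly := by
    conv_lhs => rw [hs₂]
    exact my_charpoly_unitary_conj V₂ _ hV₂
  have hchd : (Matrix.diagonal d₁).charpoly = (Matrix.diagonal d₂).charpoly :=
    e₁.symm.trans (hc.trans e₂)
  rw [my_charpoly_diagonal, my_charpoly_diagonal] at hchd
  have hroots : Multiset.map d₁ Finset.univ.val = Multiset.map d₂ Finset.univ.val := by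
    have r1 := Polynomial.roots_multiset_prod_X_sub_C (Multiset.map d₁ Finset.univ.val)
    have r2 := Polynomial.roots_multiset_prod_X_sub_C (Multiset.map d₂ Finset.univ.val)
    rw [← r1, ← r2]
    congr 1
    simpa [Finset.prod, Multiset.map_map, Function.comp_def] using hchd
  have hrootsR : Multiset.map h₁.eigenvalues Finset.univ.val
      = Multiset.map h₂.eigenvalues Finset.univ.val := by
    apply Multiset.map_injective (f := (RCLike.ofReal : ℝ → ℂ)) RCLike.ofReal_injective
    simpa [Multiset.map_map, hd₁, hd₂, Function.comp_def] using hroots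
  obtain ⟨σ, hσ⟩ := my_exists_perm h₁.eigenvalues h₂.eigenvalues hrootsR
  have hdd : d₁ = d₂ ∘ σ := by
    funext i; simp [hd₁, hd₂, congrFun hσ i]
  have h2' : star V₂ * V₂ = 1 := Matrix.mem_unitaryGroup_iff'.mp hV₂
  have cancel : ∀ x : Matrix (Fin k) (Fin k) ℂ, star V₂ * (V₂ * x) = x := fun x => by
    rw [← Matrix.mul_assoc, h2', Matrix.one_mul]
  refine ⟨V₁ * permM σ * star V₂, ?_, ?_⟩
  · exact mul_mem (mul_mem hV₁ (permM_unitary σ)) (Unitary.star_mem hV₂)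
  · rw [hs₁, hdd, ← permM_conj_diagonal σ d₂, hs₂]
    simp only [StarMul.star_mul, star_star, Matrix.mul_assoc, cancel]

end Sim

section SqrtMono

variable {k : ℕ}

lemma my_psd_mulVec_eq_zero {P : Matrix (Fin k) (Fin k) ℂ} (hP : P.PosSemidef)
    {v : Fin k → ℂ} (h0 : dotProduct (star v) (P *ᵥ v) = 0) : P *ᵥ v = 0 := by
  have hP' : P = hP.sqrt * hP.sqrt := hP.sqrt_mul_self.symm
  have hH : hP.sqrtᴴ = hP.sqrt := hP.posSemidef_sqrt.1
  have key : dotProduct (star v) (P *ᵥ v)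
      = dotProduct (star (hP.sqrt *ᵥ v)) (hP.sqrt *ᵥ v) := by
    conv_lhs => rw [hP']
    rw [← Matrix.mulVec_mulVec, Matrix.dotProduct_mulVec, Matrix.star_mulVec, hH]
  rw [key, dotProduct_star_self_eq_zero] at h0
  conv_lhs => rw [hP']
  rw [← Matrix.mulVec_mulVec, h0, Matrix.mulVec_zero]

lemma my_sqrt_mono {P Q : Matrix (Fin k) (Fin k) ℂ} (hP : P.PosSemidef) (hQ : Q.PosSemidef)
    (h : (Q - P).PosSemidef) : (hQ.sqrt - hP.sqrt).PosSemidef := by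
  set sP := hP.sqrt with hsP
  set sQ := hQ.sqrt with hsQ
  have hsPH : sPᴴ = sP := hP.posSemidef_sqrt.1
  have hsQH : sQᴴ = sQ := hQ.posSemidef_sqrt.1
  set R := sQ - sP with hR
  have hRH : R.IsHermitian := hQ.posSemidef_sqrt.1.sub hP.posSemidef_sqrt.1
  apply hRH.posSemidef_iff_eigenvalues_nonneg.mpr
  intro i
  by_contra hneg
  push_neg at hneg
  set lam := hRH.eigenvalues i with hlam
  set v : Fin k → ℂ := ⇑(hRH.eigenvectorBasis i) with hv
  have hv0 : v ≠ 0 := by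
    intro hz
    exact hRH.eigenvectorBasis.orthonormal.ne_zero i (by ext x; exact congrFun hz x)
  have hev : R *ᵥ v = (lam : ℂ) • v := by
    have h' := hRH.mulVec_eigenvectorBasis i
    rwa [RCLike.real_smul_eq_coe_smul (K := ℂ)] at h'
  have hkey : Q - P = R * sQ + sP * R := by
    rw [hR]
    simp only [Matrix.sub_mul, Matrix.mul_sub]
    rw [hQ.sqrt_mul_self, hP.sqrt_mul_self]
    abel
  have hsv : star v ᵥ* R = (lam : ℂ) • star v := by
    have hst : star (R *ᵥ v) = star v ᵥ* Rᴴ := Matrix.star_mulVec _ _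
    rw [hRH.eq] at hst
    rw [← hst, hev, star_smul]
    congr 1
    simp
  set α := dotProduct (star v) (sQ *ᵥ v) with hα
  set β := dotProduct (star v) (sP *ᵥ v) with hβ
  have hα0 : 0 ≤ α := hQ.posSemidef_sqrt.dotProduct_mulVec_nonneg v
  have hβ0 : 0 ≤ β := hP.posSemidef_sqrt.dotProduct_mulVec_nonneg v
  have hcalc : dotProduct (star v) ((Q - P) *ᵥ v) = (lam : ℂ) * (α + β) := by
    rw [hkey, Matrix.add_mulVec, dotProduct_add]
    have t1 : dotProduct (star v) ((R * sQ) *ᵥ v) = (lam : ℂ) * α := by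
      rw [← Matrix.mulVec_mulVec, Matrix.dotProduct_mulVec, hsv, smul_dotProduct,
        smul_eq_mul]
    have t2 : dotProduct (star v) ((sP * R) *ᵥ v) = (lam : ℂ) * β := by
      rw [← Matrix.mulVec_mulVec, hev, Matrix.mulVec_smul, dotProduct_smul, smul_eq_mul]
    rw [t1, t2, mul_add]
  have hge : 0 ≤ (lam : ℂ) * (α + β) := hcalc ▸ h.dotProduct_mulVec_nonneg v
  have hab : 0 ≤ α + β := add_nonneg hα0 hβ0
  have hle : (lam : ℂ) * (α + β) ≤ 0 :=
    mul_nonpos_of_nonpos_of_nonneg (by exact_mod_cast hneg.le) hab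
  have heq : (lam : ℂ) * (α + β) = 0 := le_antisymm hle hge
  have hlam0 : (lam : ℂ) ≠ 0 := by exact_mod_cast hneg.ne
  have hab0 : α + β = 0 := (mul_eq_zero.mp heq).resolve_left hlam0
  have hα00 : α = 0 := le_antisymm (by rw [← hab0]; exact le_add_of_nonneg_right hβ0) hα0
  have hβ00 : β = 0 := by rw [← hab0, hα00, zero_add]
  have hQv : sQ *ᵥ v = 0 := my_psd_mulVec_eq_zero hQ.posSemidef_sqrt hα00
  have hPv : sP *ᵥ v = 0 := my_psd_mulVec_eq_zero hP.posSemidef_sqrt hβ00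
  have hRv : R *ᵥ v = 0 := by rw [hR, Matrix.sub_mulVec, hQv, hPv, sub_zero]
  rw [hev] at hRv
  have : (lam : ℂ) = 0 := (smul_eq_zero.mp hRv).resolve_right hv0
  exact hneg.ne (by exact_mod_cast this)

end SqrtMono

lemma my_exists_factor {k : ℕ} {N' : Type*} [Fintype N'] [DecidableEq N']
    {S : Matrix (Fin k) (Fin k) ℂ} (hS : S.IsHermitian)
    (C : Matrix N' (Fin k) ℂ) (hC : Cᴴ * C = S * S) :
    ∃ W : Matrix N' (Fin k) ℂ, C = W * S ∧ (1 - Wᴴ * W).PosSemidef ∧ (1 - W * Wᴴ).PosSemidef := by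
  classical
  set V : Matrix (Fin k) (Fin k) ℂ :=
    (Matrix.IsHermitian.eigenvectorUnitary hS : Matrix (Fin k) (Fin k) ℂ) with hVd
  have hV1 : V * star V = 1 :=
    Matrix.mem_unitaryGroup_iff.mp (Matrix.IsHermitian.eigenvectorUnitary hS).2
  have hV2 : star V * V = 1 :=
    Matrix.mem_unitaryGroup_iff'.mp (Matrix.IsHermitian.eigenvectorUnitary hS).2
  have mulcf : ∀ f g : Fin k → ℂ,
      (V * Matrix.diagonal f * star V) * (V * Matrix.diagonal g * star V)
      = V * Matrix.diagonal (f * g) * star V := by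
    intro f g
    have h1 : V * Matrix.diagonal f * star V * (V * Matrix.diagonal g * star V)
        = V * (Matrix.diagonal f * (star V * V) * Matrix.diagonal g) * star V := by
      simp only [Matrix.mul_assoc]
    rw [h1, hV2, Matrix.mul_one, Matrix.diagonal_mul_diagonal]
    rfl
  have hermcf : ∀ f : Fin k → ℂ,
      (V * Matrix.diagonal f * star V)ᴴ = V * Matrix.diagonal (star f) * star V := by
    intro f
    simp only [Matrix.conjTranspose_mul, Matrix.diagonal_conjTranspose,
      Matrix.star_eq_conjTranspose, Matrix.conjTranspose_conjTranspose, Matrix.mul_assoc]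
  set ev := hS.eigenvalues with hev
  set d : Fin k → ℂ := RCLike.ofReal ∘ ev with hd
  set g : Fin k → ℂ := fun i => if ev i = 0 then 0 else ((ev i : ℝ) : ℂ)⁻¹ with hg
  set p : Fin k → ℂ := fun i => if ev i = 0 then 0 else 1 with hp
  have hdg : d * g = p := by
    funext i
    by_cases hz : ev i = 0 <;>
      simp [hd, hg, hp, hz, mul_inv_cancel₀, Complex.ofReal_ne_zero]
  have hgd : g * d = p := by rw [mul_comm]; exact hdg
  have hdp : d * p = d := by
    funext i; by_cases hz : ev i = 0 <;> simp [hd, hp, hz]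
  have hpd : p * d = d := by rw [mul_comm]; exact hdp
  have hgp : g * p = g := by
    funext i; by_cases hz : ev i = 0 <;> simp [hg, hp, hz]
  have hpp : p * p = p := by
    funext i; by_cases hz : ev i = 0 <;> simp [hp, hz]
  have hstarp : star p = p := by
    funext i; by_cases hz : ev i = 0 <;> simp [hp, hz]
  have hstarg : star g = g := by
    funext i; by_cases hz : ev i = 0 <;> simp [hg, hz, ← Complex.ofReal_inv]
  set S' : Matrix (Fin k) (Fin k) ℂ := V * Matrix.diagonal d * star V with hS'
  set pinv : Matrix (Fin k) (Fin k) ℂ := V * Matrix.diagonal g * star V with hpinv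
  set Pi : Matrix (Fin k) (Fin k) ℂ := V * Matrix.diagonal p * star V with hPi
  have hspec : S = S' := by rw [hS.spectral_theorem, Unitary.conjStarAlgAut_apply]
  have hS'pinv : S' * pinv = Pi := by rw [hS', hpinv, mulcf, hdg]
  have hpinvS' : pinv * S' = Pi := by rw [hS', hpinv, mulcf, hgd]
  have hS'Pi : S' * Pi = S' := by rw [hS', hPi, mulcf, hdp]
  have hPiS' : Pi * S' = S' := by rw [hS', hPi, mulcf, hpd]
  have hpinvPi : pinv * Pi = pinv := by rw [hpinv, hPi, mulcf, hgp]
  have hPiPi : Pi * Pi = Pi := by rw [hPi, mulcf, hpp]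
  have hPiH : Piᴴ = Pi := by rw [hPi, hermcf, hstarp]
  have hpinvH : pinvᴴ = pinv := by rw [hpinv, hermcf, hstarg]
  have hC' : Cᴴ * C = S' * S' := by rw [hC, hspec]
  have h1Pi : S' * (1 - Pi) = 0 := by rw [Matrix.mul_sub, Matrix.mul_one, hS'Pi, sub_self]
  have hCz : C * (1 - Pi) = 0 := by
    rw [← Matrix.conjTranspose_mul_self_eq_zero]
    calc (C * (1 - Pi))ᴴ * (C * (1 - Pi)) = (1 - Pi)ᴴ * ((Cᴴ * C) * (1 - Pi)) := by
          rw [Matrix.conjTranspose_mul]; simp only [Matrix.mul_assoc]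
      _ = (1 - Pi)ᴴ * (S' * (S' * (1 - Pi))) := by rw [hC']; simp only [Matrix.mul_assoc]
      _ = 0 := by rw [h1Pi, Matrix.mul_zero, Matrix.mul_zero]
  have hCPi : C * Pi = C := by
    rw [Matrix.mul_sub, Matrix.mul_one, sub_eq_zero] at hCz
    exact hCz.symm
  refine ⟨C * pinv, ?_, ?_, ?_⟩
  · conv_rhs => rw [hspec]
    rw [Matrix.mul_assoc, hpinvS', hCPi]
  · have hWW : (C * pinv)ᴴ * (C * pinv) = Pi := by
      calc (C * pinv)ᴴ * (C * pinv) = pinvᴴ * ((Cᴴ * C) * pinv) := by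
            rw [Matrix.conjTranspose_mul]; simp only [Matrix.mul_assoc]
        _ = pinv * (S' * (S' * pinv)) := by rw [hC', hpinvH]; simp only [Matrix.mul_assoc]
        _ = Pi := by rw [hS'pinv, ← Matrix.mul_assoc, hpinvS', hPiPi]
    rw [hWW]
    have hid : (1 - Pi)ᴴ * (1 - Pi) = 1 - Pi := by
      rw [Matrix.conjTranspose_sub, Matrix.conjTranspose_one, hPiH, Matrix.mul_sub,
        Matrix.mul_one, Matrix.sub_mul, Matrix.one_mul, hPiPi]
      abel
    have := Matrix.posSemidef_conjTranspose_mul_self (1 - Pi)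
    rwa [hid] at this
  · have hWW : (C * pinv)ᴴ * (C * pinv) = Pi := by
      calc (C * pinv)ᴴ * (C * pinv) = pinvᴴ * ((Cᴴ * C) * pinv) := by
            rw [Matrix.conjTranspose_mul]; simp only [Matrix.mul_assoc]
        _ = pinv * (S' * (S' * pinv)) := by rw [hC', hpinvH]; simp only [Matrix.mul_assoc]
        _ = Pi := by rw [hS'pinv, ← Matrix.mul_assoc, hpinvS', hPiPi]
    have hWPi : (C * pinv) * Pi = C * pinv := by
      rw [Matrix.mul_assoc, hpinvPi]
    set M : Matrix N' N' ℂ := (C * pinv) * (C * pinv)ᴴ with hM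
    have hMH : Mᴴ = M := by
      rw [hM, Matrix.conjTranspose_mul, Matrix.conjTranspose_conjTranspose]
    have hMM : M * M = M := by
      rw [hM]
      calc C * pinv * (C * pinv)ᴴ * (C * pinv * (C * pinv)ᴴ)
          = (C * pinv) * ((C * pinv)ᴴ * (C * pinv)) * (C * pinv)ᴴ := by
            simp only [Matrix.mul_assoc]
        _ = (C * pinv) * (C * pinv)ᴴ := by rw [hWW, hWPi]
    have hid : (1 - M)ᴴ * (1 - M) = 1 - M := by
      rw [Matrix.conjTranspose_sub, Matrix.conjTranspose_one, hMH, Matrix.mul_sub,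
        Matrix.mul_one, Matrix.sub_mul, Matrix.one_mul, hMM]
      abel
    have := Matrix.posSemidef_conjTranspose_mul_self (1 - M)
    rwa [hid] at this

set_option maxHeartbeats 2000000 in
theorem block_psd_abs_bound {n : ℕ} (A B X : Matrix (Fin n) (Fin n) ℂ)
    (hA : A.PosSemidef) (hB : B.PosSemidef)
    (h : (Matrix.fromBlocks A X Xᴴ B).PosSemidef) :
    ∃ U : Matrix (Fin n) (Fin n) ℂ, U ∈ Matrix.unitaryGroup (Fin n) ℂ ∧
      (hB.sqrt * Uᴴ * A * U * hB.sqrt - Xᴴ * X).PosSemidef ∧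
      ((hA.sqrt * U * hB.sqrt)ᴴ * (hA.sqrt * U * hB.sqrt) - Xᴴ * X).PosSemidef ∧
      (absM (hA.sqrt * U * hB.sqrt) - absM X).PosSemidef := by
  classical
  have hRaH : hA.sqrtᴴ = hA.sqrt := hA.posSemidef_sqrt.1
  have hRbH : hB.sqrtᴴ = hB.sqrt := hB.posSemidef_sqrt.1
  have hRa2 : hA.sqrt * hA.sqrt = A := hA.sqrt_mul_self
  have hRb2 : hB.sqrt * hB.sqrt = B := hB.sqrt_mul_self
  have hNH : h.sqrtᴴ = h.sqrt := h.posSemidef_sqrt.1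
  have hN2 : h.sqrt * h.sqrt = Matrix.fromBlocks A X Xᴴ B := h.sqrt_mul_self
  have hsub : ∀ (e₁ e₂ : Fin n → Fin n ⊕ Fin n),
      (h.sqrt.submatrix id e₁)ᴴ * (h.sqrt.submatrix id e₂)
        = ((Matrix.fromBlocks A X Xᴴ B).submatrix e₁ e₂) := by
    intro e₁ e₂
    rw [Matrix.conjTranspose_submatrix,
      ← Matrix.submatrix_mul h.sqrtᴴ h.sqrt e₁ id e₂ Function.bijective_id, hNH, hN2]
  have h11 : (h.sqrt.submatrix id Sum.inl)ᴴ * (h.sqrt.submatrix id Sum.inl)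
      = hA.sqrt * hA.sqrt := by
    rw [hsub, hRa2]; ext i j; simp
  have h22 : (h.sqrt.submatrix id Sum.inr)ᴴ * (h.sqrt.submatrix id Sum.inr)
      = hB.sqrt * hB.sqrt := by
    rw [hsub, hRb2]; ext i j; simp
  have h12 : (h.sqrt.submatrix id Sum.inl)ᴴ * (h.sqrt.submatrix id Sum.inr) = X := by
    rw [hsub]; ext i j; simp
  obtain ⟨W₁, hW₁, hW₁a, hW₁b⟩ := my_exists_factor hA.posSemidef_sqrt.1 _ h11
  obtain ⟨W₂, hW₂, hW₂a, hW₂b⟩ := my_exists_factor hB.posSemidef_sqrt.1 _ h22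
  obtain ⟨K, hK⟩ : ∃ K : Matrix (Fin n) (Fin n) ℂ, K = W₁ᴴ * W₂ := ⟨_, rfl⟩
  have hXf : X = hA.sqrt * K * hB.sqrt := by
    rw [← h12, hW₁, hW₂, Matrix.conjTranspose_mul, hRaH, hK]
    simp only [Matrix.mul_assoc]
  have hKK : ((1 : Matrix (Fin n) (Fin n) ℂ) - K * Kᴴ).PosSemidef := by
    have e : (1 : Matrix (Fin n) (Fin n) ℂ) - K * Kᴴ
        = (1 - W₁ᴴ * W₁) + W₁ᴴ * (1 - W₂ * W₂ᴴ) * W₁ := by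
      rw [hK]
      simp only [Matrix.conjTranspose_mul, Matrix.conjTranspose_conjTranspose,
        Matrix.mul_sub, Matrix.sub_mul, Matrix.mul_one, Matrix.one_mul]
      simp only [Matrix.mul_assoc]
      abel
    rw [e]
    exact hW₁a.add (hW₂b.conjTranspose_mul_mul_same W₁)
  obtain ⟨T, hT⟩ : ∃ T : Matrix (Fin n) (Fin n) ℂ, T = hA.sqrt * K := ⟨_, rfl⟩
  have hT1 : (A - T * Tᴴ).PosSemidef := by
    have e : hA.sqrt * (1 - K * Kᴴ) * hA.sqrtᴴ = A - T * Tᴴ := by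
      rw [hRaH, hT, Matrix.conjTranspose_mul, hRaH, Matrix.mul_sub, Matrix.mul_one,
        Matrix.sub_mul, hRa2]
      congr 1
      simp only [Matrix.mul_assoc]
    rw [← e]
    exact hKK.mul_mul_conjTranspose_same hA.sqrt
  have hch : (Tᴴ * T).charpoly = (T * Tᴴ).charpoly := my_charpoly_mul_comm _ _
  obtain ⟨Wu, hWu, hsim⟩ := my_hermitian_similar
    (Matrix.posSemidef_conjTranspose_mul_self T).1
    (Matrix.posSemidef_self_mul_conjTranspose T).1 hch
  refine ⟨star Wu, Unitary.star_mem hWu, ?_⟩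
  have hstst : (star Wu)ᴴ = Wu := by
    rw [Matrix.star_eq_conjTranspose, Matrix.conjTranspose_conjTranspose]
  have hsim' : Tᴴ * T = Wu * (T * Tᴴ) * Wuᴴ := by
    rw [hsim, Matrix.star_eq_conjTranspose]
  have key : ((star Wu)ᴴ * A * (star Wu) - Tᴴ * T).PosSemidef := by
    have base := hT1.mul_mul_conjTranspose_same Wu
    have e : Wu * (A - T * Tᴴ) * Wuᴴ = (star Wu)ᴴ * A * (star Wu) - Tᴴ * T := by
      simp only [Matrix.star_eq_conjTranspose, Matrix.conjTranspose_conjTranspose]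
      rw [Matrix.mul_sub, Matrix.sub_mul, ← hsim']
    rw [← e]
    exact base
  have c1 : (hB.sqrt * (star Wu)ᴴ * A * (star Wu) * hB.sqrt - Xᴴ * X).PosSemidef := by
    have e : hB.sqrtᴴ * ((star Wu)ᴴ * A * (star Wu) - Tᴴ * T) * hB.sqrt
        = hB.sqrt * (star Wu)ᴴ * A * (star Wu) * hB.sqrt - Xᴴ * X := by
      rw [hXf]
      simp only [hT, Matrix.conjTranspose_mul, hRaH, hRbH, Matrix.mul_sub, Matrix.sub_mul]
      simp only [Matrix.mul_assoc]
    rw [← e]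
    exact key.conjTranspose_mul_mul_same hB.sqrt
  have e2 : (hA.sqrt * (star Wu) * hB.sqrt)ᴴ * (hA.sqrt * (star Wu) * hB.sqrt)
      = hB.sqrt * (star Wu)ᴴ * A * (star Wu) * hB.sqrt := by
    conv_rhs => rw [← hRa2]
    simp only [Matrix.conjTranspose_mul, hRaH, hRbH]
    simp only [Matrix.mul_assoc]
  have c2 : ((hA.sqrt * (star Wu) * hB.sqrt)ᴴ * (hA.sqrt * (star Wu) * hB.sqrt)
      - Xᴴ * X).PosSemidef := by
    rw [e2]; exact c1
  refine ⟨c1, c2, ?_⟩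
  exact my_sqrt_mono (Matrix.posSemidef_conjTranspose_mul_self X)
    (Matrix.posSemidef_conjTranspose_mul_self (hA.sqrt * (star Wu) * hB.sqrt)) c2
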